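/- Let R be an artinian Gorenstein ℂ-algebra with dim_ℂ R = k, let M be a finitely generated R-module, and let W ⊆ M be a ℂ-linear subspace such that for every R-submodule N ⊆ M with dim_ℂ(M/N) ≤ k the composite map W → M → M/N is surjective. Then W = M. -/

import Mathlib

/-!
A linear functional `f : M → ℂ` vanishing on `W` but not at some `m` factors, by Gorenstein
duality, as `lam ∘ φ` with `φ : M → R` an `R`-linear map. Its kernel `N` has
`dim (M / N) = dim (range φ) ≤ dim R = k`, so some `w ∈ W` satisfies `φ w = φ m`, whence
`f m = f w = 0`, a contradiction.
-/

open Module LinearMap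

section Gorenstein

variable {K R : Type*} [Field K] [CommRing R] [Algebra K R] {lam : R →ₗ[K] K}

theorem eq_of_forall_apply_mul_eq (hlam : ∀ a : R, (∀ b : R, lam (a * b) = 0) → a = 0)
    {a c : R} (h : ∀ b : R, lam (a * b) = lam (c * b)) : a = c :=
  sub_eq_zero.mp <| hlam _ fun b => by rw [sub_mul, map_sub, h, sub_self]

variable [FiniteDimensional K R]

noncomputable def dualEquivOfNondegenerate
    (hlam : ∀ a : R, (∀ b : R, lam (a * b) = 0) → a = 0) : R ≃ₗ[K] Dual K R :=
  ((LinearMap.mul K R).compr₂ lam).linearEquivOfInjective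
    (fun _ _ h => eq_of_forall_apply_mul_eq hlam fun b => LinearMap.congr_fun h b)
    Subspace.dual_finrank_eq.symm

theorem dualEquivOfNondegenerate_apply
    (hlam : ∀ a : R, (∀ b : R, lam (a * b) = 0) → a = 0) (a b : R) :
    dualEquivOfNondegenerate hlam a b = lam (a * b) :=
  rfl

variable {M : Type*} [AddCommGroup M] [Module R M] [Module K M] [IsScalarTower K R M]

theorem exists_linearMap_apply_eq (hlam : ∀ a : R, (∀ b : R, lam (a * b) = 0) → a = 0)
    (f : M →ₗ[K] K) : ∃ φ : M →ₗ[R] R, ∀ m : M, lam (φ m) = f m := by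
  let g : M → R := fun m =>
    (dualEquivOfNondegenerate hlam).symm (f ∘ₗ (toSpanSingleton R M m).restrictScalars K)
  have hg : ∀ m b, lam (g m * b) = f (b • m) := fun m b => by
    rw [← dualEquivOfNondegenerate_apply hlam, LinearEquiv.apply_symm_apply]
    rfl
  refine ⟨{ toFun := g, map_add' := ?_, map_smul' := ?_ }, fun m => by simpa using! hg m 1⟩
  · exact fun m m' => eq_of_forall_apply_mul_eq hlam fun b => by
      rw [add_mul, map_add, hg, hg, hg, smul_add, map_add]
  · exact fun r m => eq_of_forall_apply_mul_eq hlam fun b => by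
      rw [RingHom.id_apply, hg, smul_eq_mul, mul_comm r, mul_assoc, hg, smul_smul, mul_comm b]

end Gorenstein

theorem finrank_quotient_ker_le {K R M P : Type*} [Field K] [CommRing R] [Algebra K R]
    [AddCommGroup M] [Module R M] [Module K M] [IsScalarTower K R M]
    [AddCommGroup P] [Module R P] [Module K P] [IsScalarTower K R P] [FiniteDimensional K P]
    (φ : M →ₗ[R] P) : finrank K (M ⧸ ker φ) ≤ finrank K P :=
  ((φ.quotKerEquivRange.restrictScalars K).finrank_eq).trans_le
    (Submodule.finrank_le ((range φ).restrictScalars K))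

theorem statement19_general
    (R : Type*) [CommRing R] [Algebra ℂ R] [FiniteDimensional ℂ R]
    (k : ℕ) (hk : Module.finrank ℂ R = k)
    (lam : R →ₗ[ℂ] ℂ)
    (hGor : ∀ a : R, (∀ b : R, lam (a * b) = 0) → a = 0)
    (M : Type*) [AddCommGroup M] [Module R M] [Module ℂ M] [IsScalarTower ℂ R M]
    (W : Submodule ℂ M)
    (hW : ∀ N : Submodule R M, Module.finrank ℂ (M ⧸ N) ≤ k →
      ∀ m : M, ∃ w ∈ W,
        (Submodule.Quotient.mk w : M ⧸ N) = Submodule.Quotient.mk m) :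
    W = ⊤ := by
  refine eq_top_iff.mpr fun m _ => by_contra fun hm => ?_
  obtain ⟨f, hfm, hWf⟩ := W.exists_le_ker_of_notMem hm
  obtain ⟨φ, hφ⟩ := exists_linearMap_apply_eq hGor f
  obtain ⟨w, hwW, hwm⟩ := hW (ker φ) (hk ▸ finrank_quotient_ker_le φ) m
  have hφw : φ w = φ m := by
    simpa [sub_eq_zero] using (Submodule.Quotient.eq _).mp hwm
  exact hfm (by rw [← hφ, ← hφw, hφ]; exact hWf hwW)

/-- **Statement 19.**
Let `R` be an artinian Gorenstein `ℂ`-algebra with `dim_ℂ R = k` (Gorenstein is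
expressed, as in the context, by the existence of a `ℂ`-linear functional
`lam : R → ℂ` for which the pairing `(a, b) ↦ lam (a * b)` is nondegenerate),
let `M` be a finitely generated `R`-module, and let `W ⊆ M` be a `ℂ`-linear
subspace such that for every `R`-submodule `N ⊆ M` with `dim_ℂ (M / N) ≤ k`
the composite `W → M → M / N` is surjective.  Then `W = M`. -/
theorem statement19
    (R : Type*) [CommRing R] [Algebra ℂ R] [FiniteDimensional ℂ R]
    (k : ℕ) (hk : Module.finrank ℂ R = k)
    (lam : R →ₗ[ℂ] ℂ)
    (hGor : ∀ a : R, (∀ b : R, lam (a * b) = 0) → a = 0)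
    (M : Type*) [AddCommGroup M] [Module R M] [Module ℂ M] [IsScalarTower ℂ R M]
    [Module.Finite R M]
    (W : Submodule ℂ M)
    (hW : ∀ N : Submodule R M, Module.finrank ℂ (M ⧸ N) ≤ k →
      ∀ m : M, ∃ w ∈ W,
        (Submodule.Quotient.mk w : M ⧸ N) = Submodule.Quotient.mk m) :
    W = ⊤ :=
  statement19_general R k hk lam hGor M W hW
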